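/- arXiv:2203.01210 — 3 statements merged into one kernel-verified Lean document; each statement's English description precedes it below -/
import Mathlib

section
/- For each vertex i of the defining graph, the canonical homomorphism from the vertex group G_i to the graph product Γ = Γ(𝒢, (G_i)_{i∈I}) is injective. -/
/-- The commutation relators of a graph product along the graph with adjacency `adj`. -/
def graphProdRels {I : Type*} (adj : I → I → Prop) (G : I → Type*) [∀ i, Group (G i)] :
    Set (Monoid.CoprodI G) :=
  { x | ∃ (i j : I), adj i j ∧ ∃ (gi : G i) (gj : G j),
      x = Monoid.CoprodI.of gi * Monoid.CoprodI.of gj *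
        (Monoid.CoprodI.of gi)⁻¹ * (Monoid.CoprodI.of gj)⁻¹ }

/-- The graph product of the groups `G i` along the graph with adjacency relation `adj`:
the quotient of the free product by the normal closure of the commutation relators. -/
abbrev GraphProd {I : Type*} (adj : I → I → Prop) (G : I → Type*) [∀ i, Group (G i)] :
    Type _ :=
  Monoid.CoprodI G ⧸ Subgroup.normalClosure (graphProdRels adj G)

/-- The canonical homomorphism from a vertex group into the graph product. -/
def GraphProd.of {I : Type*} (adj : I → I → Prop) (G : I → Type*) [∀ i, Group (G i)]
    (i : I) : G i →* GraphProd adj G :=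
  (QuotientGroup.mk' _).comp Monoid.CoprodI.of

/-- The parabolic subgroup `Γ_J` generated by the images of the `G j`, `j ∈ J`. -/
def GraphProd.parab {I : Type*} (adj : I → I → Prop) (G : I → Type*) [∀ i, Group (G i)]
    (J : Set I) : Subgroup (GraphProd adj G) :=
  ⨆ j ∈ J, (GraphProd.of adj G j).range

/-!
Graph products have the universal property of the quotient they are defined as: a family of
homomorphisms `G j →* H` whose images commute along the edges factors through the graph product.
The family that is the identity on `G i` and trivial on every other vertex group is such a
family, because the graph has no loops, so every edge has an endpoint other than `i`. Its
factorisation is a left inverse of `G i → Γ`.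
-/

namespace GraphProd

variable {I : Type*} {adj : I → I → Prop} {G : I → Type*} [∀ i, Group (G i)]
  {H : Type*} [Group H]

theorem normalClosure_graphProdRels_le_ker_lift (f : ∀ i, G i →* H)
    (hf : ∀ i j, adj i j → ∀ (gi : G i) (gj : G j), Commute (f i gi) (f j gj)) :
    Subgroup.normalClosure (graphProdRels adj G) ≤ (Monoid.CoprodI.lift f).ker := by
  refine Subgroup.normalClosure_le_normal ?_
  rintro _ ⟨i, j, hij, gi, gj, rfl⟩
  simp only [SetLike.mem_coe, MonoidHom.mem_ker, map_mul, map_inv, Monoid.CoprodI.lift_of,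
    (hf i j hij gi gj).eq]
  group

def lift (f : ∀ i, G i →* H)
    (hf : ∀ i j, adj i j → ∀ (gi : G i) (gj : G j), Commute (f i gi) (f j gj)) :
    GraphProd adj G →* H :=
  QuotientGroup.lift _ (Monoid.CoprodI.lift f) fun _ hx =>
    normalClosure_graphProdRels_le_ker_lift f hf hx

@[simp]
theorem lift_of (f : ∀ i, G i →* H)
    (hf : ∀ i j, adj i j → ∀ (gi : G i) (gj : G j), Commute (f i gi) (f j gj)) (i : I)
    (g : G i) : lift f hf (GraphProd.of adj G i g) = f i g := by
  simp [lift, GraphProd.of]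

theorem commute_mulSingle_id [DecidableEq I] (hirr : ∀ i, ¬ adj i i) (i : I) (j k : I)
    (hjk : adj j k) (gj : G j) (gk : G k) :
    Commute (Pi.mulSingle (M := fun j => G j →* G i) i (MonoidHom.id (G i)) j gj)
      (Pi.mulSingle (M := fun j => G j →* G i) i (MonoidHom.id (G i)) k gk) := by
  by_cases hj : j = i
  · have hk : k ≠ i := by rintro rfl; exact hirr k (hj ▸ hjk)
    rw [Pi.mulSingle_eq_of_ne hk]
    exact Commute.one_right _
  · rw [Pi.mulSingle_eq_of_ne hj]
    exact Commute.one_left _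

def proj [DecidableEq I] (hirr : ∀ i, ¬ adj i i) (i : I) : GraphProd adj G →* G i :=
  lift _ (commute_mulSingle_id hirr i)

theorem leftInverse_proj_of [DecidableEq I] (hirr : ∀ i, ¬ adj i i) (i : I) :
    Function.LeftInverse (proj hirr i) (GraphProd.of adj G i) :=
  fun g => by simp [proj]

end GraphProd

theorem graphProd_of_injective_general {I : Type*} (adj : I → I → Prop) (G : I → Type*)
    [∀ i, Group (G i)] (hirr : ∀ i, ¬ adj i i) (i : I) :
    Function.Injective (GraphProd.of adj G i) := by
  classical
  exact (GraphProd.leftInverse_proj_of hirr i).injective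

/-- For each vertex `i` of the defining (simplicial) graph, the canonical
homomorphism from the vertex group `G i` to the graph product is injective. -/
theorem graphProd_of_injective {I : Type*} (adj : I → I → Prop) (G : I → Type*)
    [∀ i, Group (G i)] (hsymm : Symmetric adj) (hirr : ∀ i, ¬ adj i i) (i : I) :
    Function.Injective (GraphProd.of adj G i) :=
  graphProd_of_injective_general adj G hirr i
end

section
/- Let G be a group and H₁ < H₂ < G subgroups with H₁ of finite index in H₂ and H₁ separable in G. Then there exists a finite-index normal subgroup Ĝ ⊴ G such that H₂ ∩ Ĝ ≤ H₁. -/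
/-!
Separating each of the finitely many cosets `q H₁` of `H₁` in `H₂` that lie outside `H₁` by a
finite quotient of `G`, and intersecting the kernels, gives `Ĝ`. An element of `H₂ ∩ Ĝ` lying in
such a coset `q H₁` would put `q` in `Ĝ H₁`, which the kernel chosen for `q` excludes.
-/

/-- A subgroup `H` of a group `G` is separable if for every `g ∈ G \ H` there is a
homomorphism `f : G → F` to a finite group `F` with `f g ∉ f(H)`. -/
def SubgroupSeparable {G : Type*} [Group G] (H : Subgroup G) : Prop :=
  ∀ g : G, g ∉ H → ∃ (F : Type) (_ : Group F) (_ : Finite F) (f : G →* F),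
    f g ∉ H.map f

namespace SubgroupSeparable

variable {G : Type*} [Group G] {H : Subgroup G}

theorem exists_normal_finiteIndex_notMem_sup (hsep : SubgroupSeparable H) {g : G} (hg : g ∉ H) :
    ∃ K : Subgroup G, K.Normal ∧ K.FiniteIndex ∧ g ∉ H ⊔ K := by
  obtain ⟨F, _, _, f, hf⟩ := hsep g hg
  exact ⟨f.ker, inferInstance, inferInstance, by rwa [← Subgroup.comap_map_eq]⟩

theorem exists_normal_finiteIndex_forall_notMem_sup (hsep : SubgroupSeparable H)
    {ι : Type*} [Finite ι] (g : ι → G) (hg : ∀ i, g i ∉ H) :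
    ∃ K : Subgroup G, K.Normal ∧ K.FiniteIndex ∧ ∀ i, g i ∉ H ⊔ K := by
  choose K hKn hKfi hK using fun i => hsep.exists_normal_finiteIndex_notMem_sup (hg i)
  exact ⟨⨅ i, K i, Subgroup.normal_iInf_normal hKn, Subgroup.finiteIndex_iInf hKfi,
    fun i hi => hK i (sup_le_sup_left (iInf_le K i) H hi)⟩

end SubgroupSeparable

theorem exists_normal_finiteIndex_inter_le_general {G : Type*} [Group G] (H₁ H₂ : Subgroup G)
    (hfi : (H₁.subgroupOf H₂).FiniteIndex)
    (hsep : SubgroupSeparable H₁) :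
    ∃ Ghat : Subgroup G, Ghat.Normal ∧ Ghat.FiniteIndex ∧ H₂ ⊓ Ghat ≤ H₁ := by
  let Q := H₂ ⧸ H₁.subgroupOf H₂
  have : Finite Q := Subgroup.finite_quotient_of_finiteIndex
  obtain ⟨K, hKn, hKfi, hK⟩ := hsep.exists_normal_finiteIndex_forall_notMem_sup
    (fun q : {q : Q // (q.out : G) ∉ H₁} => (q.1.out : G)) (fun q => q.2)
  refine ⟨K, hKn, hKfi, ?_⟩
  rintro g ⟨hg₂, hgK⟩
  set q : Q := QuotientGroup.mk ⟨g, hg₂⟩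
  have hq : (q.out⁻¹ * ⟨g, hg₂⟩ : H₂) ∈ H₁.subgroupOf H₂ := QuotientGroup.eq.mp q.out_eq
  by_contra hg
  have hqH : (q.out : G) ∉ H₁ := fun h => hg (by simpa using H₁.mul_mem h hq)
  refine hK ⟨q, hqH⟩ ?_
  simpa using mul_mem (Subgroup.mem_sup_right hgK) (Subgroup.mem_sup_left (inv_mem hq))

/-- If `H₁ ≤ H₂ ≤ G` with `H₁` of finite index in `H₂` and separable in `G`,
then there is a finite-index normal subgroup `Ĝ ⊴ G` with `H₂ ∩ Ĝ ≤ H₁`. -/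
theorem exists_normal_finiteIndex_inter_le {G : Type*} [Group G] (H₁ H₂ : Subgroup G)
    (h12 : H₁ ≤ H₂) (hfi : (H₁.subgroupOf H₂).FiniteIndex)
    (hsep : SubgroupSeparable H₁) :
    ∃ Ghat : Subgroup G, Ghat.Normal ∧ Ghat.FiniteIndex ∧ H₂ ⊓ Ghat ≤ H₁ :=
  exists_normal_finiteIndex_inter_le_general H₁ H₂ hfi hsep
end

section
/- Let J ⊆ I be spherical, let J^⊥ = (⋂_{j∈J} star(j)) \ J be the set of vertices adjacent to every element of J but not in J, and let J^⊥̲ = J ∪ J^⊥. Then in the graph product Γ, the subgroup Γ_{J^⊥̲} is the internal direct product of Γ_J and Γ_{J^⊥}: every element of Γ_J commutes with every element of Γ_{J^⊥}, Γ_J ∩ Γ_{J^⊥} = {1}, and Γ_{J^⊥̲} = Γ_J · Γ_{J^⊥}. -/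
theorem Subgroup.mem_sup_iff_exists_mul_of_commute {Γ : Type*} [Group Γ] {H K : Subgroup Γ}
    (hHK : ∀ a ∈ H, ∀ b ∈ K, Commute a b) {x : Γ} :
    x ∈ H ⊔ K ↔ ∃ a ∈ H, ∃ b ∈ K, x = a * b := by
  have comm : ∀ (a : H) (b : K), Commute (H.subtype a) (K.subtype b) := fun a b =>
    hHK a a.2 b b.2
  have hrange : (H.subtype.noncommCoprod K.subtype comm).range = H ⊔ K := by
    rw [MonoidHom.noncommCoprod_range, H.range_subtype, K.range_subtype]
  simp [← hrange, MonoidHom.noncommCoprod_apply, eq_comm]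

namespace GraphProd

variable {I : Type*} {adj : I → I → Prop} {G : I → Type*} [∀ i, Group (G i)]

open scoped commutatorElement

theorem of_commute_of_adj {i j : I} (h : adj i j) (gi : G i) (gj : G j) :
    Commute (of adj G i gi) (of adj G j gj) := by
  have hrel : ⁅Monoid.CoprodI.of gi, Monoid.CoprodI.of gj⁆ ∈
      Subgroup.normalClosure (graphProdRels adj G) :=
    Subgroup.subset_normalClosure ⟨i, j, h, gi, gj, commutatorElement_def _ _⟩
  rw [← commutatorElement_eq_one_iff_commute, of, of, MonoidHom.comp_apply, MonoidHom.comp_apply,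
    ← map_commutatorElement]
  exact (QuotientGroup.eq_one_iff _).2 hrel

theorem parab_le_iff {J : Set I} {H : Subgroup (GraphProd adj G)} :
    parab adj G J ≤ H ↔ ∀ j ∈ J, ∀ g : G j, of adj G j g ∈ H := by
  rw [parab, iSup₂_le_iff]
  exact forall₂_congr fun _ _ => ⟨fun h g => h ⟨g, rfl⟩, fun h _ ⟨g, hg⟩ => hg ▸ h g⟩

theorem parab_union (J K : Set I) :
    parab adj G (J ∪ K) = parab adj G J ⊔ parab adj G K :=
  iSup_union

theorem parab_le_centralizer {J K : Set I} (h : ∀ j ∈ J, ∀ k ∈ K, adj j k) :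
    parab adj G J ≤ Subgroup.centralizer (parab adj G K) := by
  refine parab_le_iff.2 fun j hj g => ?_
  have hK : parab adj G K ≤ Subgroup.centralizer {of adj G j g} :=
    parab_le_iff.2 fun k hk g' => Subgroup.mem_centralizer_singleton_iff.2
      (of_commute_of_adj (h j hj k hk) g g').eq.symm
  exact fun b hb => Subgroup.mem_centralizer_singleton_iff.1 (hK hb)

open Classical in
noncomputable def retract (J : Set I) : GraphProd adj G →* GraphProd adj G :=
  QuotientGroup.lift _ (Monoid.CoprodI.lift fun i => if i ∈ J then of adj G i else 1) <| by
    refine Subgroup.normalClosure_le_normal ?_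
    rintro _ ⟨i, j, hij, gi, gj, rfl⟩
    simp only [SetLike.mem_coe, MonoidHom.mem_ker, map_mul, map_inv, Monoid.CoprodI.lift_of]
    rw [← commutatorElement_def, commutatorElement_eq_one_iff_commute]
    split_ifs
    · exact of_commute_of_adj hij gi gj
    all_goals simp

theorem retract_of_mem {J : Set I} {i : I} (hi : i ∈ J) (g : G i) :
    retract J (of adj G i g) = of adj G i g := by
  simp [retract, of, hi]

theorem retract_of_notMem {J : Set I} {i : I} (hi : i ∉ J) (g : G i) :
    retract J (of adj G i g) = 1 := by
  simp [retract, of, hi]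

theorem retract_eq_self_of_mem_parab {J : Set I} {a : GraphProd adj G} (ha : a ∈ parab adj G J) :
    retract J a = a :=
  (parab_le_iff (H := (retract J).eqLocus (.id _))).2
    (fun _ hj g => retract_of_mem hj g) ha

theorem parab_le_ker_retract {J K : Set I} (h : Disjoint J K) :
    parab adj G K ≤ (retract J).ker :=
  parab_le_iff.2 fun _ hk g => retract_of_notMem (h.notMem_of_mem_right hk) g

theorem parab_inf_parab_eq_bot {J K : Set I} (h : Disjoint J K) :
    parab adj G J ⊓ parab adj G K = ⊥ := by
  refine eq_bot_iff.2 fun x ⟨hxJ, hxK⟩ => ?_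
  rw [Subgroup.mem_bot, ← retract_eq_self_of_mem_parab hxJ]
  exact parab_le_ker_retract h hxK

end GraphProd

theorem graphProd_parab_perp_internal_directProduct_general {I : Type*}
    (adj : I → I → Prop) (G : I → Type*) [∀ i, Group (G i)]
    (J : Set I) :
    (∀ a ∈ GraphProd.parab adj G J,
      ∀ b ∈ GraphProd.parab adj G {i | i ∉ J ∧ ∀ j ∈ J, adj i j}, Commute a b) ∧
    (GraphProd.parab adj G J ⊓ GraphProd.parab adj G {i | i ∉ J ∧ ∀ j ∈ J, adj i j} = ⊥) ∧
    (∀ x : GraphProd adj G,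
      x ∈ GraphProd.parab adj G (J ∪ {i | i ∉ J ∧ ∀ j ∈ J, adj i j}) ↔
        ∃ a ∈ GraphProd.parab adj G J,
          ∃ b ∈ GraphProd.parab adj G {i | i ∉ J ∧ ∀ j ∈ J, adj i j}, x = a * b) := by
  set K : Set I := {i | i ∉ J ∧ ∀ j ∈ J, adj i j}
  have hcomm : ∀ a ∈ GraphProd.parab adj G J, ∀ b ∈ GraphProd.parab adj G K, Commute a b :=
    fun a ha b hb => GraphProd.parab_le_centralizer (fun k hk j hj => hk.2 j hj) hb a ha
  refine ⟨hcomm, GraphProd.parab_inf_parab_eq_bot (Set.disjoint_right.2 fun _ hk => hk.1),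
    fun x => ?_⟩
  rw [GraphProd.parab_union, Subgroup.mem_sup_iff_exists_mul_of_commute hcomm]

/-- For spherical `J`, with `J^⊥` the set of vertices adjacent to every
element of `J` but not in `J`, the subgroup `Γ_{J^⊥̲}` (where `J^⊥̲ = J ∪ J^⊥`) is the
internal direct product of `Γ_J` and `Γ_{J^⊥}`. -/
theorem graphProd_parab_perp_internal_directProduct {I : Type*}
    (adj : I → I → Prop) (G : I → Type*) [∀ i, Group (G i)]
    (hsymm : Symmetric adj) (hirr : ∀ i, ¬ adj i i)
    (J : Set I) (hJ : J.Pairwise adj) :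
    (∀ a ∈ GraphProd.parab adj G J,
      ∀ b ∈ GraphProd.parab adj G {i | i ∉ J ∧ ∀ j ∈ J, adj i j}, Commute a b) ∧
    (GraphProd.parab adj G J ⊓ GraphProd.parab adj G {i | i ∉ J ∧ ∀ j ∈ J, adj i j} = ⊥) ∧
    (∀ x : GraphProd adj G,
      x ∈ GraphProd.parab adj G (J ∪ {i | i ∉ J ∧ ∀ j ∈ J, adj i j}) ↔
        ∃ a ∈ GraphProd.parab adj G J,
          ∃ b ∈ GraphProd.parab adj G {i | i ∉ J ∧ ∀ j ∈ J, adj i j}, x = a * b) :=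
  graphProd_parab_perp_internal_directProduct_general adj G J
end
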